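/- arXiv:1603.01527 — 2 statements merged into one kernel-verified Lean document; each statement's English description precedes it below -/
import Mathlib

section
/- Let X be a periodic stationary process with period 1 and continuous sample paths which is ergodic. Then there exists a continuous deterministic function g : ℝ → ℝ with period 1 such that X has the same law as the process t ↦ g(t + U), where U is uniformly distributed on [0,1]; equivalently, the law of X on H is the pushforward of the uniform distribution on [0,1] under the map u ↦ g(· + u). -/
/-!
For a measurable set `A`, the time `ν_g(A) = ∫₀¹ 1_A(θ_u g) du` that the orbit of a path `g`
spends in `A` is a shift-invariant function of `g`, hence `μ`-a.s. constant by ergodicity, and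
by Fubini and stationarity its mean is `μ(A)`. Since paths are continuous, the σ-field of `H` is
generated by the countable π-system of finite intersections of the sets `{g | g q < r}` with
`q, r` rational; so one typical path `g` has `ν_g = μ` on this π-system, hence everywhere.
-/

open MeasureTheory Filter Set

noncomputable section

/-- The path space `H`: continuous functions `ℝ → ℝ` with period 1, carrying the
(trace of the) cylindrical σ-field. -/
abbrev PathSpace : Type := {g : ℝ → ℝ // Continuous g ∧ Function.Periodic g 1}

/-- The shift `θ_c` acting on the path space: `(θ_c g)(x) = g (x + c)`. -/
def shiftPath (c : ℝ) (g : PathSpace) : PathSpace :=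
  ⟨fun x => g.1 (x + c),
   g.2.1.comp (continuous_id.add continuous_const),
   fun x => by simpa [add_right_comm] using g.2.2 (x + c)⟩

/-- A periodic stationary process with period 1, identified with its law on the
path space: the law is invariant under every shift `θ_c`. -/
def IsStationaryProc (μ : Measure PathSpace) : Prop :=
  ∀ c : ℝ, μ.map (shiftPath c) = μ

/-- Ergodicity: every measurable set invariant under all shifts has measure 0 or 1. -/
def IsErgodicProc (μ : Measure PathSpace) : Prop :=
  ∀ A : Set PathSpace, MeasurableSet A → (∀ c : ℝ, shiftPath c ⁻¹' A = A) →
    μ A = 0 ∨ μ A = 1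

/-- An intrinsic location functional, described through the endpoints of the
compact interval `[a,b]` (with `a < b`), taking values in `ℝ ∪ {∞} = WithTop ℝ`.
The defining conditions are imposed for all paths in `H`, i.e. all continuous
1-periodic functions. -/
structure ILF where
  /-- the location `L(g,[a,b])` -/
  L : (ℝ → ℝ) → ℝ → ℝ → WithTop ℝ
  /-- measurability of `L(·,I)` on `H` (with `{∞}` a separate measurable point) -/
  measurable' : ∀ a b : ℝ, a < b → ∀ s : Set ℝ, MeasurableSet s →
    MeasurableSet {g : PathSpace | ∃ t ∈ s, L g.1 a b = (t : WithTop ℝ)}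
  /-- `L(g,I) ∈ I ∪ {∞}` -/
  mem_or_top : ∀ g : ℝ → ℝ, Continuous g → Function.Periodic g 1 →
    ∀ a b : ℝ, a < b → L g a b = ⊤ ∨ ∃ t ∈ Set.Icc a b, L g a b = (t : WithTop ℝ)
  /-- shift compatibility: `L(g,I) = L(θ_c g, I - c) + c` -/
  shift : ∀ g : ℝ → ℝ, Continuous g → Function.Periodic g 1 →
    ∀ a b c : ℝ, a < b →
      L g a b = L (fun x => g (x + c)) (a - c) (b - c) + (c : WithTop ℝ)
  /-- stability under restrictions -/
  restrict : ∀ g : ℝ → ℝ, Continuous g → Function.Periodic g 1 →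
    ∀ a b a' b' : ℝ, a < b → a' < b' → a ≤ a' → b' ≤ b →
      (∃ t ∈ Set.Icc a' b', L g a b = (t : WithTop ℝ)) → L g a' b' = L g a b
  /-- consistency of existence -/
  exist : ∀ g : ℝ → ℝ, Continuous g → Function.Periodic g 1 →
    ∀ a b a' b' : ℝ, a < b → a' < b' → a ≤ a' → b' ≤ b →
      L g a' b' ≠ ⊤ → L g a b ≠ ⊤

/-- The point of `ℝ` encoding the extra point `∞` of `[0,T] ∪ {∞}`; since all
intervals considered are `[0,T]` with `T ≤ 1`, the point `2` is an isolated
point of `[0,T] ∪ {2}`, exactly as `∞` is in `[0,T] ∪ {∞}`. -/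
def inftyPoint : ℝ := 2

/-- The embedding of `[0,T] ∪ {∞}` into `ℝ`, sending `∞` to `inftyPoint`. -/
def embedTop (x : WithTop ℝ) : ℝ := x.untopD inftyPoint

/-- The law `F^X_{L,T}` of `L(X,[0,T])`, as a measure on `ℝ`
(a probability measure supported on `[0,T] ∪ {inftyPoint}`). -/
def lawOn (Lf : ILF) (μ : Measure PathSpace) (T : ℝ) : Measure ℝ :=
  μ.map fun g : PathSpace => embedTop (Lf.L g.1 0 T)

/-- `f` is a right-continuous density on `(0,T)` of (the restriction to `(0,T)` of)
the measure `F`; in particular this restriction is absolutely continuous. -/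
def HasDensityOn (F : Measure ℝ) (f : ℝ → ℝ) (T : ℝ) : Prop :=
  (∀ t ∈ Set.Ioo 0 T, ContinuousWithinAt f (Set.Ici t) t) ∧
  ∀ s : Set ℝ, MeasurableSet s → s ⊆ Set.Ioo 0 T →
    F s = ∫⁻ t in s, ENNReal.ofReal (f t)

/-- The total variation of `f` on `(t₁,t₂)` is at most `M`: the sum over any
finite increasing sequence of points of `(t₁,t₂)` is at most `M`. -/
def TVBound (f : ℝ → ℝ) (t₁ t₂ M : ℝ) : Prop :=
  ∀ (n : ℕ) (s : ℕ → ℝ), (∀ i ≤ n, s i ∈ Set.Ioo t₁ t₂) →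
    (∀ i < n, s i < s (i + 1)) →
    ∑ i ∈ Finset.range n, |f (s (i + 1)) - f (s i)| ≤ M

/-- Condition (TV): for all `0 < t₁ < t₂ < T`, the total variation of `f` on
`(t₁,t₂)` is at most `f t₁ + f t₂`. -/
def CondTV (f : ℝ → ℝ) (T : ℝ) : Prop :=
  ∀ t₁ t₂ : ℝ, 0 < t₁ → t₁ < t₂ → t₂ < T → TVBound f t₁ t₂ (f t₁ + f t₂)

open scoped ENNReal

theorem Function.Periodic.setLIntegral_Ioc_comp_add_right {f : ℝ → ℝ≥0∞} {T : ℝ}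
    [Fact (0 < T)] (hf : Function.Periodic f T) (c : ℝ) :
    ∫⁻ u in Ioc 0 T, f (u + c) = ∫⁻ u in Ioc 0 T, f u := by
  have h := AddCircle.lintegral_preimage T 0
  rw [zero_add] at h
  calc ∫⁻ u in Ioc 0 T, f (u + c)
      = ∫⁻ u in Ioc 0 T, hf.lift ((u : AddCircle T) + c) :=
        lintegral_congr fun u => by rw [← AddCircle.coe_add, hf.lift_coe]
    _ = ∫⁻ z, hf.lift z := by rw [h (fun z => hf.lift (z + c)), lintegral_add_right_eq_self]
    _ = ∫⁻ u in Ioc 0 T, f u := by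
        rw [← h]
        exact lintegral_congr fun u => hf.lift_coe u

theorem IsErgodicProc.ae_eq_const {μ : Measure PathSpace} [IsProbabilityMeasure μ]
    (herg : IsErgodicProc μ) {β : Type*} [MeasurableSpace β]
    [MeasurableSpace.CountablySeparated β] [Nonempty β] {f : PathSpace → β} (hf : Measurable f)
    (hinv : ∀ c g, f (shiftPath c g) = f g) :
    ∃ b, f =ᵐ[μ] Function.const _ b :=
  exists_eventuallyEq_const_of_forall_separating MeasurableSet fun U hU => by
    rcases herg (f ⁻¹' U) (hf hU) (fun c => by ext g; simp [hinv]) with h | h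
    · exact Or.inr (measure_eq_zero_iff_ae_notMem.1 h)
    · exact Or.inl ((mem_ae_iff_prob_eq_one (hf hU)).2 h)

namespace PathSpace

theorem shiftPath_shiftPath (c u : ℝ) (g : PathSpace) :
    shiftPath u (shiftPath c g) = shiftPath (u + c) g :=
  Subtype.ext <| funext fun x => congrArg g.1 (add_assoc x u c)

theorem periodic_shiftPath (g : PathSpace) : Function.Periodic (fun c => shiftPath c g) 1 :=
  fun c => Subtype.ext <| funext fun x => by
    show g.1 (x + (c + 1)) = g.1 (x + c)
    rw [← add_assoc]
    exact g.2.2 (x + c)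

theorem measurable_eval (t : ℝ) : Measurable fun g : PathSpace => g.1 t :=
  (measurable_pi_apply t).comp measurable_subtype_coe

theorem measurable_shiftPath_uncurry : Measurable (Function.uncurry shiftPath) :=
  .subtype_mk <| measurable_pi_lambda _ fun x =>
    measurable_uncurry_of_continuous_of_measurable (u := fun c (g : PathSpace) => g.1 (x + c))
      (fun g => g.2.1.comp (continuous_const.add continuous_id)) fun _ => measurable_eval _

theorem measurable_shiftPath (c : ℝ) : Measurable (shiftPath c) :=
  measurable_shiftPath_uncurry.comp (measurable_const.prodMk measurable_id)

theorem measurable_shiftPath_left (g : PathSpace) : Measurable fun u => shiftPath u g :=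
  measurable_shiftPath_uncurry.comp (measurable_id.prodMk measurable_const)

def orbitMeasure (g : PathSpace) : Measure PathSpace :=
  (volume.restrict (Icc 0 1)).map fun u => shiftPath u g

instance (g : PathSpace) : IsProbabilityMeasure (orbitMeasure g) :=
  have : IsProbabilityMeasure (volume.restrict (Icc (0 : ℝ) 1)) := ⟨by simp⟩
  Measure.isProbabilityMeasure_map (measurable_shiftPath_left g).aemeasurable

theorem orbitMeasure_apply_eq_volume (g : PathSpace) {A : Set PathSpace} (hA : MeasurableSet A) :
    orbitMeasure g A = volume.restrict (Icc 0 1) ((fun u => shiftPath u g) ⁻¹' A) :=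
  Measure.map_apply (measurable_shiftPath_left g) hA

theorem orbitMeasure_apply_eq_lintegral (g : PathSpace) {A : Set PathSpace}
    (hA : MeasurableSet A) :
    orbitMeasure g A = ∫⁻ u in Ioc 0 1, A.indicator 1 (shiftPath u g) := by
  rw [orbitMeasure_apply_eq_volume g hA, Measure.restrict_congr_set Ioc_ae_eq_Icc.symm,
    ← lintegral_indicator_one (measurable_shiftPath_left g hA)]
  rfl

theorem orbitMeasure_shiftPath (c : ℝ) (g : PathSpace) :
    orbitMeasure (shiftPath c g) = orbitMeasure g := by
  have : Fact ((0 : ℝ) < 1) := ⟨one_pos⟩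
  ext A hA
  simp only [orbitMeasure_apply_eq_lintegral _ hA, shiftPath_shiftPath]
  exact ((periodic_shiftPath g).comp (A.indicator 1)).setLIntegral_Ioc_comp_add_right c

theorem measurable_orbitMeasure_apply {A : Set PathSpace} (hA : MeasurableSet A) :
    Measurable fun g => orbitMeasure g A := by
  simp only [orbitMeasure_apply_eq_volume _ hA]
  exact measurable_measure_prodMk_left ((measurable_shiftPath_uncurry.comp measurable_swap) hA)

theorem lintegral_orbitMeasure_apply {μ : Measure PathSpace} [SFinite μ]
    (hstat : IsStationaryProc μ) {A : Set PathSpace} (hA : MeasurableSet A) :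
    ∫⁻ g, orbitMeasure g A ∂μ = μ A := by
  set ν := volume.restrict (Icc (0 : ℝ) 1)
  have hS : MeasurableSet ((fun p : PathSpace × ℝ => shiftPath p.2 p.1) ⁻¹' A) :=
    (measurable_shiftPath_uncurry.comp measurable_swap) hA
  calc ∫⁻ g, orbitMeasure g A ∂μ
      = (μ.prod ν) ((fun p : PathSpace × ℝ => shiftPath p.2 p.1) ⁻¹' A) := by
        simp only [orbitMeasure_apply_eq_volume _ hA, Measure.prod_apply hS]
        rfl
    _ = ∫⁻ u, μ (shiftPath u ⁻¹' A) ∂ν := Measure.prod_apply_symm hS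
    _ = ∫⁻ _, μ A ∂ν := lintegral_congr fun u => by
        rw [← Measure.map_apply (measurable_shiftPath u) hA, hstat u]
    _ = μ A := by simp [ν]

theorem ae_orbitMeasure_apply_eq {μ : Measure PathSpace} [IsProbabilityMeasure μ]
    (hstat : IsStationaryProc μ) (herg : IsErgodicProc μ) {A : Set PathSpace}
    (hA : MeasurableSet A) :
    ∀ᵐ g ∂μ, orbitMeasure g A = μ A := by
  obtain ⟨κ, hκ⟩ := herg.ae_eq_const (measurable_orbitMeasure_apply hA) fun c g => by
    rw [orbitMeasure_shiftPath]
  have hκA : κ = μ A := by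
    rw [← lintegral_orbitMeasure_apply hstat hA, lintegral_congr_ae hκ]
    simp
  filter_upwards [hκ] with g hg
  rw [hg, hκA, Function.const_apply]

def ratCylinders : Set (Set PathSpace) :=
  range fun t : Finset (ℚ × ℚ) => {g | ∀ p ∈ t, g.1 p.1 < (p.2 : ℝ)}

theorem countable_ratCylinders : ratCylinders.Countable :=
  countable_range _

theorem isPiSystem_ratCylinders : IsPiSystem ratCylinders := by
  rintro _ ⟨s, rfl⟩ _ ⟨t, rfl⟩ -
  exact ⟨s ∪ t, by ext g; simp [or_imp, forall_and]⟩

theorem measurableSet_of_mem_ratCylinders {A : Set PathSpace} (hA : A ∈ ratCylinders) :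
    MeasurableSet A := by
  obtain ⟨t, rfl⟩ := hA
  simp only [ofPred_forall]
  exact .iInter fun p => .iInter fun _ => measurableSet_lt (measurable_eval _) measurable_const

theorem measurable_eval_of_forall_rat {m : MeasurableSpace PathSpace}
    (h : ∀ q : ℚ, Measurable[m] fun g : PathSpace => g.1 q) (t : ℝ) :
    Measurable[m] fun g : PathSpace => g.1 t := by
  obtain ⟨q, -, -, hq⟩ := Real.exists_seq_rat_strictMono_tendsto t
  exact measurable_of_tendsto_metrizable (fun n => h (q n))
    (tendsto_pi_nhds.2 fun g => (g.2.1.tendsto t).comp hq)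

theorem generateFrom_ratCylinders :
    MeasurableSpace.generateFrom ratCylinders = (inferInstance : MeasurableSpace PathSpace) := by
  refine le_antisymm (MeasurableSpace.generateFrom_le fun A hA =>
    measurableSet_of_mem_ratCylinders hA) ?_
  refine Measurable.comap_le ((@measurable_pi_iff _ _ _ (.generateFrom ratCylinders) _ _).2 <|
    measurable_eval_of_forall_rat fun q => measurable_of_Iio fun a => ?_)
  have hIio : (fun g : PathSpace => g.1 q) ⁻¹' Iio a =
      ⋃ (r : ℚ) (_ : (r : ℝ) < a),
        {g | ∀ p ∈ ({(q, r)} : Finset (ℚ × ℚ)), g.1 p.1 < (p.2 : ℝ)} := by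
    ext g
    simpa using ⟨fun h => exists_rat_btwn h |>.imp fun r hr => ⟨hr.2, hr.1⟩,
      fun ⟨r, hra, hgr⟩ => hgr.trans hra⟩
  rw [hIio]
  exact .iUnion fun r => .iUnion fun _ => MeasurableSpace.measurableSet_generateFrom ⟨_, rfl⟩

end PathSpace

/-- A continuous periodic ergodic process with period 1 is
(in law) a uniformly random shift of a fixed deterministic continuous
1-periodic function: its law is the pushforward of the uniform distribution on
`[0,1]` under `u ↦ g(· + u)`. -/
theorem stmt0 (μ : Measure PathSpace) [IsProbabilityMeasure μ]
    (hstat : IsStationaryProc μ) (herg : IsErgodicProc μ) :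
    ∃ (g : ℝ → ℝ) (hc : Continuous g) (hp : Function.Periodic g 1),
      μ = (volume.restrict (Set.Icc (0 : ℝ) 1)).map
        (fun u => shiftPath u ⟨g, hc, hp⟩) := by
  have hcyl : ∀ᵐ g ∂μ, ∀ A ∈ PathSpace.ratCylinders, g.orbitMeasure A = μ A :=
    (ae_ball_iff PathSpace.countable_ratCylinders).2 fun A hA =>
      PathSpace.ae_orbitMeasure_apply_eq hstat herg
        (PathSpace.measurableSet_of_mem_ratCylinders hA)
  obtain ⟨g, hg⟩ := hcyl.exists
  exact ⟨g.1, g.2.1, g.2.2, ext_of_generate_finite _ PathSpace.generateFrom_ratCylinders.symm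
    PathSpace.isPiSystem_ratCylinders (fun A hA => (hg A hA).symm)
    (measure_univ.trans (measure_univ (μ := g.orbitMeasure)).symm)⟩
end
end

section
/- Let X be a periodic stationary process with period 1 and continuous sample paths, L a first-time intrinsic location functional, and T ∈ (0,1]. Then the restriction of the law of L(X,[0,T]) to (0,T) is absolutely continuous and admits a density which is non-increasing on (0,T). -/
open MeasureTheory Filter Set

noncomputable section

/-- Data of a candidate partially ordered random set representation:
a shift-covariant random set `S(g) ⊆ ℝ` together with a partial order on it. -/
structure PORep where
  /-- the random (path-determined) set `S(g)` -/
  S : (ℝ → ℝ) → Set ℝ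
  /-- the partial order `⪯_g` on `S(g)`: `ord g t₁ t₂` means `t₁ ⪯_g t₂` -/
  ord : (ℝ → ℝ) → ℝ → ℝ → Prop

/-- `(S,⪯)` is a partially ordered random set representation of `L`. -/
def PORep.IsRepOf (R : PORep) (Lf : ILF) : Prop :=
  -- shift covariance of the set: `S(g) = S(θ_c g) + c`
  (∀ g : ℝ → ℝ, Continuous g → Function.Periodic g 1 → ∀ c : ℝ,
    R.S g = (fun x => x + c) '' R.S (fun x => g (x + c))) ∧
  -- shift compatibility of the order
  (∀ g : ℝ → ℝ, Continuous g → Function.Periodic g 1 → ∀ c t₁ t₂ : ℝ,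
    t₁ ∈ R.S g → t₂ ∈ R.S g → R.ord g t₁ t₂ →
      R.ord (fun x => g (x + c)) (t₁ - c) (t₂ - c)) ∧
  -- `⪯_g` is a partial order on `S(g)`
  (∀ g : ℝ → ℝ, Continuous g → Function.Periodic g 1 →
    (∀ t ∈ R.S g, R.ord g t t) ∧
    (∀ t₁ ∈ R.S g, ∀ t₂ ∈ R.S g, R.ord g t₁ t₂ → R.ord g t₂ t₁ → t₁ = t₂) ∧
    (∀ t₁ ∈ R.S g, ∀ t₂ ∈ R.S g, ∀ t₃ ∈ R.S g,
      R.ord g t₁ t₂ → R.ord g t₂ t₃ → R.ord g t₁ t₃)) ∧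
  -- representation: `L(g,I) = ∞` iff `S(g) ∩ I = ∅`, otherwise `L(g,I)` is the
  -- unique maximal element of `S(g) ∩ I` for `⪯_g`
  (∀ g : ℝ → ℝ, Continuous g → Function.Periodic g 1 → ∀ a b : ℝ, a < b →
    (R.S g ∩ Set.Icc a b = ∅ → Lf.L g a b = ⊤) ∧
    ((R.S g ∩ Set.Icc a b).Nonempty →
      ∃ t ∈ R.S g ∩ Set.Icc a b, Lf.L g a b = (t : WithTop ℝ) ∧
        ∀ s ∈ R.S g ∩ Set.Icc a b, R.ord g s t))

/-- A first-time intrinsic location functional: it admits a partially ordered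
random set representation in which earlier points always dominate later ones. -/
def ILF.FirstTime (Lf : ILF) : Prop :=
  ∃ R : PORep, R.IsRepOf Lf ∧
    ∀ g : ℝ → ℝ, Continuous g → Function.Periodic g 1 →
      ∀ t₁ ∈ R.S g, ∀ t₂ ∈ R.S g, t₁ ≤ t₂ → R.ord g t₂ t₁

/-!
For a first-time functional, `L(g,[a,b])` is the least point of `S(g) ∩ [a,b]`. So if the
location in `[0,T]` of the shifted path `θ_{-c} g` lies in `(a+c, b+c] ⊆ [c,T]`, then the
location of `g` in `[-c,T-c]` lies in `(a,b] ⊆ [0,T-c]`, and is then also its location in `[0,T]`.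
By stationarity the law `ν` of `L(X,[0,T])` therefore satisfies `ν(a+c, b+c] ≤ ν(a,b]` inside
`[0,T]`. Comparing both sides of a point `y` with translates of one small interval ending at
`y` shows that `F(t) = ν(0,t]` has decreasing slopes, i.e. is concave on `[0,T]`, and the right
derivative of a concave function is a non-increasing density of `ν` on `(0,T)`.
-/

open scoped ENNReal Topology

namespace MeasureTheory

theorem measureReal_Ioc_sub_measureReal_Ioc {ν : Measure ℝ} [IsFiniteMeasure ν] {a b c : ℝ}
    (hab : a ≤ b) (hbc : b ≤ c) : ν.real (Ioc a c) - ν.real (Ioc a b) = ν.real (Ioc b c) := by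
  rw [← Ioc_union_Ioc_eq_Ioc hab hbc,
    measureReal_union (Ioc_disjoint_Ioc_of_le le_rfl) measurableSet_Ioc, add_sub_cancel_left]

theorem Measure.restrict_Ioo_eq_of_forall_Ioc {ν ρ : Measure ℝ} [IsFiniteMeasure ν] {l u : ℝ}
    (h : ∀ a b, l < a → b < u → ν (Ioc a b) = ρ (Ioc a b)) :
    ν.restrict (Ioo l u) = ρ.restrict (Ioo l u) := by
  obtain ⟨x, -, hxl, hx⟩ := exists_seq_strictAnti_tendsto l
  obtain ⟨y, -, hyu, hy⟩ := exists_seq_strictMono_tendsto u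
  have hcover : Ioo l u = ⋃ n, Ioc (x n) (y n) := by
    ext t
    simp only [mem_Ioo, mem_iUnion, mem_Ioc]
    constructor
    · rintro ⟨hlt, htu⟩
      obtain ⟨n, hxn, hyn⟩ :=
        ((hx.eventually (gt_mem_nhds hlt)).and (hy.eventually (lt_mem_nhds htu))).exists
      exact ⟨n, hxn, hyn.le⟩
    · rintro ⟨n, hxn, hyn⟩
      exact ⟨(hxl n).trans hxn, hyn.trans_lt (hyu n)⟩
  rw [hcover, Measure.restrict_iUnion_congr]
  intro n
  refine Measure.ext_of_Ioc _ _ fun a b _ => ?_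
  rw [Measure.restrict_apply measurableSet_Ioc, Measure.restrict_apply measurableSet_Ioc,
    Ioc_inter_Ioc]
  exact h _ _ ((hxl n).trans_le (le_max_right _ _)) ((min_le_right _ _).trans_lt (hyu n))

end MeasureTheory

namespace ConcaveOn

variable {F : ℝ → ℝ} {S : Set ℝ}

theorem antitoneOn_rightDeriv (hF : ConcaveOn ℝ S F) :
    AntitoneOn (fun x => derivWithin F (Ioi x) x) (interior S) := fun x hx y hy hxy => by
  simpa [derivWithin.neg] using hF.neg.monotoneOn_rightDeriv hx hy hxy

theorem hasDerivWithinAt_rightDeriv_of_mem_interior (hF : ConcaveOn ℝ S F) {x : ℝ}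
    (hx : x ∈ interior S) : HasDerivWithinAt F (derivWithin F (Ioi x) x) (Ioi x) x := by
  simpa using (hF.neg.differentiableWithinAt_Ioi_of_mem_interior hx).neg.hasDerivWithinAt

theorem measure_Ioc_eq_setLIntegral_rightDeriv {ν : Measure ℝ} [IsFiniteMeasure ν] {l u : ℝ}
    (hF : ConcaveOn ℝ (Ioo l u) F)
    (hνF : ∀ a b, l < a → a ≤ b → b < u → ν.real (Ioc a b) = F b - F a)
    {a b : ℝ} (hla : l < a) (hbu : b < u) :
    ν (Ioc a b) = ∫⁻ t in Ioc a b, ENNReal.ofReal (derivWithin F (Ioi t) t) := by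
  set f := fun t => derivWithin F (Ioi t) t
  rcases lt_or_ge b a with hba | hab
  · simp [Ioc_eq_empty_of_le hba.le]
  have hab_sub : Icc a b ⊆ Ioo l u := Icc_subset_Ioo hla hbu
  have hderiv : ∀ t ∈ Ioo l u, HasDerivWithinAt F (f t) (Ioi t) t := fun t ht =>
    hF.hasDerivWithinAt_rightDeriv_of_mem_interior (by rwa [interior_Ioo])
  have hnonneg : ∀ t ∈ Ioo l u, 0 ≤ f t := by
    intro t ht
    obtain ⟨y, hty, hyu⟩ := exists_between ht.2
    refine le_trans ?_ (hF.slope_le_rightDeriv ht ⟨ht.1.trans hty, hyu⟩ hty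
      (hderiv t ht).differentiableWithinAt)
    rw [slope_def_field, ← hνF t y ht.1 hty.le hyu]
    exact div_nonneg measureReal_nonneg (sub_nonneg.2 hty.le)
  have hint : IntervalIntegrable f volume a b :=
    (hF.antitoneOn_rightDeriv.mono (by rwa [interior_Ioo, uIcc_of_le hab])).intervalIntegrable
  have hnonneg' : 0 ≤ᵐ[volume.restrict (Ioc a b)] f :=
    (ae_restrict_iff' measurableSet_Ioc).2 <| ae_of_all _ fun t ht =>
      hnonneg t (hab_sub (Ioc_subset_Icc_self ht))
  rw [← ofReal_integral_eq_lintegral_ofReal ((intervalIntegrable_iff_integrableOn_Ioc_of_le hab).1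
    hint) hnonneg', ← intervalIntegral.integral_of_le hab,
    intervalIntegral.integral_eq_sub_of_hasDeriv_right_of_le hab
      (hF.continuousOn_interior.mono (by rwa [interior_Ioo]))
      (fun t ht => hderiv t (hab_sub (Ioo_subset_Icc_self ht))) hint,
    ← hνF a b hla hab hbu, ofReal_measureReal]

theorem measure_eq_setLIntegral_rightDeriv {ν : Measure ℝ} [IsFiniteMeasure ν] {l u : ℝ}
    (hF : ConcaveOn ℝ (Ioo l u) F)
    (hνF : ∀ a b, l < a → a ≤ b → b < u → ν.real (Ioc a b) = F b - F a)
    {s : Set ℝ} (hs : MeasurableSet s) (hsub : s ⊆ Ioo l u) :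
    ν s = ∫⁻ t in s, ENNReal.ofReal (derivWithin F (Ioi t) t) := by
  have hrestrict := Measure.restrict_Ioo_eq_of_forall_Ioc (ν := ν)
    (ρ := volume.withDensity fun t => ENNReal.ofReal (derivWithin F (Ioi t) t))
    fun a b hla hbu => by
      rw [withDensity_apply _ measurableSet_Ioc]
      exact hF.measure_Ioc_eq_setLIntegral_rightDeriv hνF hla hbu
  rw [← Measure.restrict_eq_self ν hsub, hrestrict, Measure.restrict_eq_self _ hsub,
    withDensity_apply _ hs]

end ConcaveOn

def IsShiftDecreasingOn (ν : Measure ℝ) (T : ℝ) : Prop :=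
  ∀ a b c : ℝ, 0 ≤ a → 0 ≤ c → b + c ≤ T → ν (Ioc (a + c) (b + c)) ≤ ν (Ioc a b)

namespace IsShiftDecreasingOn

variable {ν : Measure ℝ} {T : ℝ} (hν : IsShiftDecreasingOn ν T)
include hν

theorem measure_Ioc_add_nsmul_le {y δ : ℝ} (hδ : 0 ≤ δ) (hδy : δ ≤ y) (k : ℕ)
    (hk : y + k * δ ≤ T) : ν (Ioc y (y + k * δ)) ≤ k * ν (Ioc (y - δ) y) := by
  induction k with
  | zero => simp
  | succ k ih =>
    push_cast at hk ⊢
    have hstep := hν (y - δ) y ((k + 1) * δ) (by linarith) (by positivity) (by linarith)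
    rw [show y - δ + (k + 1) * δ = y + k * δ by ring] at hstep
    calc ν (Ioc y (y + (k + 1) * δ))
        = ν (Ioc y (y + k * δ) ∪ Ioc (y + k * δ) (y + (k + 1) * δ)) := by
          rw [Ioc_union_Ioc_eq_Ioc (by linarith [mul_nonneg k.cast_nonneg hδ]) (by linarith)]
      _ ≤ ν (Ioc y (y + k * δ)) + ν (Ioc (y + k * δ) (y + (k + 1) * δ)) := measure_union_le _ _
      _ ≤ k * ν (Ioc (y - δ) y) + ν (Ioc (y - δ) y) := add_le_add (ih (by linarith)) hstep
      _ = (k + 1) * ν (Ioc (y - δ) y) := by ring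

theorem nsmul_measure_Ioc_le {y δ : ℝ} (hδ : 0 ≤ δ) (hyT : y ≤ T) (n : ℕ) (hn : n * δ ≤ y) :
    n * ν (Ioc (y - δ) y) ≤ ν (Ioc (y - n * δ) y) := by
  induction n with
  | zero => simp
  | succ n ih =>
    push_cast at hn ⊢
    have hstep := hν (y - (n + 1) * δ) (y - n * δ) (n * δ) (by linarith) (by positivity)
      (by linarith)
    rw [show y - (n + 1) * δ + n * δ = y - δ by ring, sub_add_cancel] at hstep
    calc (n + 1) * ν (Ioc (y - δ) y) = ν (Ioc (y - δ) y) + n * ν (Ioc (y - δ) y) := by ring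
      _ ≤ ν (Ioc (y - (n + 1) * δ) (y - n * δ)) + ν (Ioc (y - n * δ) y) :=
        add_le_add hstep (ih (by linarith))
      _ = ν (Ioc (y - (n + 1) * δ) y) := by
        rw [← measure_union (Ioc_disjoint_Ioc_of_le le_rfl) measurableSet_Ioc,
          Ioc_union_Ioc_eq_Ioc (by linarith) (by linarith [mul_nonneg n.cast_nonneg hδ])]

/-- With `δ = (z - y) / k`, the interval `(y, z]` is made of `k` right translates of `(y - δ, y]`,
while `(x, y]` contains `⌊(y - x) / δ⌋` left translates of it. -/
theorem floor_mul_measure_Ioc_le {x y z : ℝ} (hx : 0 ≤ x) (hxy : x < y) (hyz : y < z)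
    (hzT : z ≤ T) {k : ℕ} (hk : 0 < k) (hδ : (z - y) / k ≤ y) :
    (⌊(y - x) / (z - y) * k⌋₊ : ℝ≥0∞) * ν (Ioc y z) ≤ k * ν (Ioc x y) := by
  set δ := (z - y) / k
  set n := ⌊(y - x) / (z - y) * k⌋₊
  have hk' : (0 : ℝ) < k := Nat.cast_pos.2 hk
  have hδ0 : 0 ≤ δ := div_nonneg (by linarith) hk'.le
  have hkδ : k * δ = z - y := mul_div_cancel₀ _ hk'.ne'
  have hnδ : n * δ ≤ y - x :=
    calc n * δ ≤ (y - x) / (z - y) * k * δ :=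
          mul_le_mul_of_nonneg_right (Nat.floor_le (by positivity)) hδ0
      _ = y - x := by rw [mul_assoc, hkδ, div_mul_cancel₀ _ (by linarith)]
  have hright : ν (Ioc y z) ≤ k * ν (Ioc (y - δ) y) := by
    have h := hν.measure_Ioc_add_nsmul_le hδ0 hδ k (by linarith)
    rwa [hkδ, add_sub_cancel] at h
  have hleft : n * ν (Ioc (y - δ) y) ≤ ν (Ioc x y) :=
    (hν.nsmul_measure_Ioc_le hδ0 (by linarith) n (by linarith)).trans
      (measure_mono (Ioc_subset_Ioc_left (by linarith)))
  calc n * ν (Ioc y z) ≤ n * (k * ν (Ioc (y - δ) y)) := by gcongr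
    _ = k * (n * ν (Ioc (y - δ) y)) := by ring
    _ ≤ k * ν (Ioc x y) := by gcongr

theorem mul_measureReal_Ioc_le [IsFiniteMeasure ν] {x y z : ℝ} (hx : 0 ≤ x) (hxy : x < y)
    (hyz : y < z) (hzT : z ≤ T) :
    (y - x) * ν.real (Ioc y z) ≤ (z - y) * ν.real (Ioc x y) := by
  set r := (y - x) / (z - y)
  have hev : ∀ᶠ k : ℕ in atTop, (⌊r * k⌋₊ / k : ℝ) * ν.real (Ioc y z) ≤ ν.real (Ioc x y) := by
    filter_upwards [eventually_gt_atTop 0,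
      (tendsto_const_div_atTop_nhds_zero_nat (z - y)).eventually
        (gt_mem_nhds (by linarith : (0 : ℝ) < y))] with k hk hδ
    have h := ENNReal.toReal_mono (by finiteness)
      (hν.floor_mul_measure_Ioc_le hx hxy hyz hzT hk hδ.le)
    rw [ENNReal.toReal_mul, ENNReal.toReal_mul, ENNReal.toReal_natCast,
      ENNReal.toReal_natCast] at h
    rw [div_mul_eq_mul_div, div_le_iff₀ (Nat.cast_pos.2 hk), mul_comm (ν.real _)]
    exact h
  have hlim : Tendsto (fun k : ℕ => (⌊r * k⌋₊ / k : ℝ) * ν.real (Ioc y z)) atTop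
      (𝓝 (r * ν.real (Ioc y z))) :=
    ((tendsto_nat_floor_mul_div_atTop (by positivity)).comp tendsto_natCast_atTop_atTop).mul_const _
  have h := le_of_tendsto hlim hev
  rwa [div_mul_eq_mul_div, div_le_iff₀ (by linarith), mul_comm (ν.real _)] at h

theorem concaveOn [IsFiniteMeasure ν] : ConcaveOn ℝ (Icc 0 T) fun t => ν.real (Ioc 0 t) := by
  refine concaveOn_of_slope_anti_adjacent (convex_Icc 0 T) fun {x y z} hx hz hxy hyz => ?_
  rw [measureReal_Ioc_sub_measureReal_Ioc (by linarith [hx.1]) hyz.le,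
    measureReal_Ioc_sub_measureReal_Ioc hx.1 hxy.le, div_le_div_iff₀ (by linarith) (by linarith),
    mul_comm, mul_comm (ν.real (Ioc x y))]
  exact hν.mul_measureReal_Ioc_le hx.1 hxy hyz hz.2

end IsShiftDecreasingOn

def PORep.IsFirstTime (R : PORep) : Prop :=
  ∀ g : ℝ → ℝ, Continuous g → Function.Periodic g 1 →
    ∀ t₁ ∈ R.S g, ∀ t₂ ∈ R.S g, t₁ ≤ t₂ → R.ord g t₂ t₁

namespace PORep

variable {Lf : ILF} {R : PORep}

theorem IsRepOf.L_eq_coe_iff_isLeast (hrep : R.IsRepOf Lf) (hR : R.IsFirstTime) (g : PathSpace)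
    {a b : ℝ} (hab : a < b) (t : ℝ) :
    Lf.L g.1 a b = t ↔ IsLeast (R.S g.1 ∩ Icc a b) t := by
  obtain ⟨-, -, hpo, hrepr⟩ := hrep
  obtain ⟨hempty, hmax⟩ := hrepr g.1 g.2.1 g.2.2 a b hab
  have hanti := (hpo g.1 g.2.1 g.2.2).2.1
  constructor
  · intro hL
    obtain ⟨t', ht', hLt', hle⟩ : ∃ t' ∈ R.S g.1 ∩ Icc a b, Lf.L g.1 a b = t' ∧
        ∀ s ∈ R.S g.1 ∩ Icc a b, R.ord g.1 s t' := by
      refine hmax (nonempty_iff_ne_empty.2 fun he => ?_)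
      simp [hempty he] at hL
    obtain rfl : t' = t := WithTop.coe_injective (hLt'.symm.trans hL)
    refine ⟨ht', fun u hu => le_of_not_gt fun hut => hut.ne ?_⟩
    exact hanti u hu.1 t' ht'.1 (hle u hu) (hR g.1 g.2.1 g.2.2 u hu.1 t' ht'.1 hut.le)
  · rintro ⟨ht, hleast⟩
    obtain ⟨t', ht', hLt', hle⟩ := hmax ⟨t, ht⟩
    obtain rfl : t = t' :=
      hanti t ht.1 t' ht'.1 (hle t ht) (hR g.1 g.2.1 g.2.2 t ht.1 t' ht'.1 (hleast ht'))
    exact hLt'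

theorem IsRepOf.L_eq_of_le (hrep : R.IsRepOf Lf) (hR : R.IsFirstTime) (g : PathSpace)
    {a b a' b' t : ℝ} (hab : a < b) (hab' : a' < b') (ha : a ≤ a') (hat : a' ≤ t) (hb : b ≤ b')
    (hL : Lf.L g.1 a b = t) : Lf.L g.1 a' b' = t := by
  obtain ⟨⟨htS, -, htb⟩, hleast⟩ := (hrep.L_eq_coe_iff_isLeast hR g hab t).1 hL
  refine (hrep.L_eq_coe_iff_isLeast hR g hab' t).2 ⟨⟨htS, hat, htb.trans hb⟩, ?_⟩
  rintro u ⟨huS, hau, hub⟩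
  rcases le_or_gt u b with hub' | hbu
  · exact hleast ⟨huS, ha.trans hau, hub'⟩
  · exact htb.trans hbu.le

end PORep

theorem measurable_shiftPath (c : ℝ) : Measurable (shiftPath c) := by
  apply Measurable.subtype_mk
  exact measurable_pi_iff.2 fun x => (measurable_pi_apply (x + c)).comp measurable_subtype_coe

namespace ILF

variable (Lf : ILF) {a b : ℝ}

theorem measurableSet_L_eq_top (hab : a < b) :
    MeasurableSet {g : PathSpace | Lf.L g.1 a b = ⊤} := by
  convert (Lf.measurable' a b hab univ MeasurableSet.univ).compl using 1
  ext g
  cases h : Lf.L g.1 a b <;> simp [h]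

theorem measurable_embedTop_L (hab : a < b) :
    Measurable fun g : PathSpace => embedTop (Lf.L g.1 a b) := by
  intro s hs
  have hpre : (fun g : PathSpace => embedTop (Lf.L g.1 a b)) ⁻¹' s =
      {g | ∃ t ∈ s, Lf.L g.1 a b = t} ∪ {g | inftyPoint ∈ s ∧ Lf.L g.1 a b = ⊤} := by
    ext g
    cases h : Lf.L g.1 a b <;> simp [embedTop, h]
  rw [hpre]
  exact (Lf.measurable' a b hab s hs).union
    ((MeasurableSet.const _).inter (Lf.measurableSet_L_eq_top hab))

theorem lawOn_apply (μ : Measure PathSpace) {T : ℝ} (hT0 : 0 < T) {s : Set ℝ}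
    (hs : MeasurableSet s) (hs_infty : inftyPoint ∉ s) :
    lawOn Lf μ T s = μ {g | ∃ t ∈ s, Lf.L g.1 0 T = t} := by
  rw [lawOn, Measure.map_apply (Lf.measurable_embedTop_L hT0) hs]
  congr 1
  ext g
  cases h : Lf.L g.1 0 T <;> simp [embedTop, h, hs_infty]

end ILF

section Stationary

variable {μ : Measure PathSpace} {Lf : ILF} {R : PORep} {T : ℝ}

theorem lawOn_preimage_sub_le (hstat : IsStationaryProc μ) (hrep : R.IsRepOf Lf)
    (hR : R.IsFirstTime) (hT0 : 0 < T) (hT1 : T ≤ 1) {c : ℝ} (hc : 0 ≤ c) {s : Set ℝ}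
    (hs : MeasurableSet s) (hsub : s ⊆ Icc 0 (T - c)) :
    lawOn Lf μ T ((· - c) ⁻¹' s) ≤ lawOn Lf μ T s := by
  have hinfty : inftyPoint ∉ s := fun h => by
    have : (2 : ℝ) ≤ T - c := (hsub h).2
    linarith
  have hinfty' : inftyPoint ∉ (· - c) ⁻¹' s := fun h => by
    have : (2 : ℝ) - c ≤ T - c := (hsub h).2
    linarith
  have hmeas : MeasurableSet {g : PathSpace | ∃ t ∈ (· - c) ⁻¹' s, Lf.L g.1 0 T = t} :=
    Lf.measurable' 0 T hT0 _ (measurable_sub_const c hs)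
  rw [Lf.lawOn_apply μ hT0 (measurable_sub_const c hs) hinfty', Lf.lawOn_apply μ hT0 hs hinfty]
  calc μ {g | ∃ t ∈ (· - c) ⁻¹' s, Lf.L g.1 0 T = t}
      = μ (shiftPath (-c) ⁻¹' {g | ∃ t ∈ (· - c) ⁻¹' s, Lf.L g.1 0 T = t}) := by
        rw [← Measure.map_apply (measurable_shiftPath _) hmeas, hstat]
    _ ≤ μ {g | ∃ t ∈ s, Lf.L g.1 0 T = t} := by
        refine measure_mono ?_
        rintro g ⟨t, hts, hL⟩
        have hshift := Lf.shift g.1 g.2.1 g.2.2 (-c) (T - c) (-c) (by linarith)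
        rw [neg_sub_neg, sub_self, sub_neg_eq_add, sub_add_cancel] at hshift
        have hL' : Lf.L g.1 (-c) (T - c) = ((t - c : ℝ) : WithTop ℝ) := by
          rw [hshift, sub_eq_add_neg, WithTop.coe_add]
          exact congrArg (· + ((-c : ℝ) : WithTop ℝ)) hL
        exact ⟨t - c, hts, hrep.L_eq_of_le hR g (by linarith) hT0 (neg_nonpos.2 hc) (hsub hts).1
          (by linarith) hL'⟩

theorem isShiftDecreasingOn_lawOn (hstat : IsStationaryProc μ) (hrep : R.IsRepOf Lf)
    (hR : R.IsFirstTime) (hT0 : 0 < T) (hT1 : T ≤ 1) : IsShiftDecreasingOn (lawOn Lf μ T) T :=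
  fun a b c ha hc hbc => by
    rw [← preimage_sub_const_Ioc]
    exact lawOn_preimage_sub_le hstat hrep hR hT0 hT1 hc measurableSet_Ioc fun t ht =>
      ⟨ha.trans ht.1.le, by linarith [ht.2]⟩

end Stationary

/-- For a first-time intrinsic location functional and a
periodic stationary process with period 1, the law of `L(X,[0,T])` restricted
to `(0,T)` is absolutely continuous with a non-increasing density. -/
theorem stmt13 (μ : Measure PathSpace) [IsProbabilityMeasure μ]
    (hstat : IsStationaryProc μ) (Lf : ILF) (hft : Lf.FirstTime)
    (T : ℝ) (hT0 : 0 < T) (hT1 : T ≤ 1) :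
    ∃ f : ℝ → ℝ, AntitoneOn f (Set.Ioo 0 T) ∧
      ∀ s : Set ℝ, MeasurableSet s → s ⊆ Set.Ioo 0 T →
        lawOn Lf μ T s = ∫⁻ t in s, ENNReal.ofReal (f t) := by
  obtain ⟨R, hrep, hR⟩ := hft
  have : IsFiniteMeasure (lawOn Lf μ T) := by unfold lawOn; infer_instance
  have hconc := (isShiftDecreasingOn_lawOn hstat hrep hR hT0 hT1).concaveOn
  refine ⟨fun t => derivWithin (fun t => (lawOn Lf μ T).real (Ioc 0 t)) (Ioi t) t, ?_,
    fun s hs hsub => ?_⟩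
  · simpa only [interior_Icc] using hconc.antitoneOn_rightDeriv
  · exact (hconc.subset Ioo_subset_Icc_self (convex_Ioo 0 T)).measure_eq_setLIntegral_rightDeriv
      (fun a b ha hab _ => (measureReal_Ioc_sub_measureReal_Ioc ha.le hab).symm) hs hsub

end
end
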